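/- Let A = [a_1+1, ..., a_r+1] be an admissible linear chain with all a_i positive integers, and let n be a positive integer. Then the adjoint of [A, n+1] (the chain A extended by the entry n+1) equals [2_n] ∗ A*, where [2_n] is the chain of n twos. -/

import Mathlib

/-! Expanding the determinant along the first row gives `d(a :: l) = a d(l) - d(l.tail)`, so
`e(a :: l) = 1 / (a - e(l))`, and raising the first entry of a chain by one adds one to `1 / e`.
With `x = e(Aᵀ)`, the hypothesis `e(B) = 1 - x` thus becomes `e(B') = 1 - 1 / (2 - x)` for the
chain `B'` obtained from `B` by raising its first entry, and each further leading `2` sends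
`1 - 1 / u` to `1 - 1 / (u + 1)`. So `[2_n] ∗ B = [2_(n-1), B']` has inductance
`1 - 1 / (n + 1 - x) = 1 - e([n + 1, Aᵀ])`. -/

/-- The tridiagonal matrix of a linear chain: diagonal entries from the list,
entries `-1` on the first sub- and super-diagonals, `0` elsewhere. -/
def chainMatrix (l : List ℤ) : Matrix (Fin l.length) (Fin l.length) ℤ :=
  fun i j =>
    if i = j then l.get i
    else if (i : ℕ) + 1 = (j : ℕ) ∨ (j : ℕ) + 1 = (i : ℕ) then -1 else 0

/-- The discriminant of a linear chain. -/
def disc (l : List ℤ) : ℤ := (chainMatrix l).det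

/-- A linear chain is admissible if it is nonempty and all entries are ≥ 2. -/
def Admissible (l : List ℤ) : Prop := l ≠ [] ∧ ∀ a ∈ l, 2 ≤ a

/-- The inductance of a chain. -/
def ind (l : List ℤ) : ℚ := (disc l.tail : ℚ) / (disc l : ℚ)

/-- The joining operation on nonempty linear chains. -/
def join (A B : List ℤ) : List ℤ := A.dropLast ++ [A.getLast! + B.head! - 1] ++ B.tail

/-- `B` is the adjoint of `A`. -/
def IsAdjoint (A B : List ℤ) : Prop := Admissible B ∧ ind B = 1 - ind A.reverse

theorem chainMatrix_cons_submatrix_succ (a : ℤ) (l : List ℤ) :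
    (chainMatrix (a :: l)).submatrix Fin.succ Fin.succ = chainMatrix l := by
  ext i j
  simp [chainMatrix, Fin.succ_inj]

theorem det_chainMatrix_submatrix_succ_succAbove_one (a b : ℤ) (t : List ℤ) :
    ((chainMatrix (a :: b :: t)).submatrix Fin.succ (Fin.succAbove (n := t.length + 1) 1)).det
      = -disc t := by
  have hsucc : Fin.succAbove (n := t.length + 1) 1 ∘ Fin.succ = Fin.succ ∘ Fin.succ := by
    ext j
    simp [Fin.succAbove, Fin.lt_def]
  have hminor : (chainMatrix (a :: b :: t)).submatrix (Fin.succ ∘ Fin.succ)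
      (Fin.succAbove (n := t.length + 1) 1 ∘ Fin.succ) = chainMatrix t := by
    rw [hsucc, ← Matrix.submatrix_submatrix, chainMatrix_cons_submatrix_succ,
      chainMatrix_cons_submatrix_succ]
  rw [Matrix.det_succ_column_zero, Fin.sum_univ_succ,
    Finset.sum_eq_zero (fun j _ => by simp [chainMatrix, Fin.succAbove, Fin.ext_iff])]
  simp [chainMatrix, Fin.succAbove, hminor, disc]

theorem disc_cons_cons (a b : ℤ) (t : List ℤ) :
    disc (a :: b :: t) = a * disc (b :: t) - disc t := by
  rw [disc, Matrix.det_succ_row_zero (n := t.length + 1), Fin.sum_univ_succ, Fin.sum_univ_succ,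
    Finset.sum_eq_zero (fun j _ => by simp [chainMatrix, Fin.ext_iff]), Fin.succAbove_zero,
    chainMatrix_cons_submatrix_succ, Fin.succ_zero_eq_one, det_chainMatrix_submatrix_succ_succAbove_one]
  simp [chainMatrix, disc, sub_eq_add_neg]

theorem disc_nil : disc [] = 1 := by
  simp [disc]

theorem disc_singleton (a : ℤ) : disc [a] = a := by
  simp [disc, chainMatrix]

theorem disc_cons (a : ℤ) {l : List ℤ} (hl : l ≠ []) :
    disc (a :: l) = a * disc l - disc l.tail := by
  obtain ⟨b, t, rfl⟩ := List.exists_cons_of_ne_nil hl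
  exact disc_cons_cons a b t

theorem disc_cons_add (a c : ℤ) (t : List ℤ) :
    disc ((a + c) :: t) = disc (a :: t) + c * disc t := by
  cases t with
  | nil => simp [disc_singleton, disc_nil]
  | cons b t => rw [disc_cons_cons, disc_cons_cons]; ring

theorem Admissible.disc_tail_pos_and_lt {l : List ℤ} (hl : Admissible l) :
    0 < disc l.tail ∧ disc l.tail < disc l := by
  obtain ⟨hne, h2⟩ := hl
  induction l with
  | nil => exact absurd rfl hne
  | cons a l ih =>
    have ha := h2 a List.mem_cons_self
    rcases eq_or_ne l [] with rfl | hl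
    · simp [disc_nil, disc_singleton]; omega
    · obtain ⟨h0, hlt⟩ := ih hl (fun x hx => h2 x (List.mem_cons_of_mem a hx))
      rw [List.tail_cons, disc_cons a hl]
      constructor <;> nlinarith

theorem Admissible.disc_pos {l : List ℤ} (hl : Admissible l) : 0 < disc l :=
  hl.disc_tail_pos_and_lt.1.trans hl.disc_tail_pos_and_lt.2

theorem Admissible.ind_lt_one {l : List ℤ} (hl : Admissible l) : ind l < 1 := by
  obtain ⟨h0, hlt⟩ := hl.disc_tail_pos_and_lt
  rw [ind, div_lt_one (by exact_mod_cast h0.trans hlt)]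
  exact_mod_cast hlt

theorem Admissible.cons_add {a c : ℤ} {t : List ℤ} (h : Admissible (a :: t)) (hc : 0 ≤ c) :
    Admissible ((a + c) :: t) := by
  have h2 : 2 ≤ a ∧ ∀ x ∈ t, 2 ≤ x := by simpa using h.2
  refine ⟨List.cons_ne_nil _ _, ?_⟩
  simp only [List.mem_cons, forall_eq_or_imp]
  exact ⟨by linarith [h2.1], h2.2⟩

theorem Admissible.replicate_two_append {l : List ℤ} (hl : Admissible l) (k : ℕ) :
    Admissible (List.replicate k 2 ++ l) := by
  refine ⟨by simp [hl.1], ?_⟩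
  simp only [List.mem_append, List.mem_replicate]
  rintro x (⟨_, rfl⟩ | hx)
  · exact le_rfl
  · exact hl.2 x hx

theorem ind_cons (a : ℤ) {l : List ℤ} (hl : l ≠ []) (hd : disc l ≠ 0) :
    ind (a :: l) = (a - ind l)⁻¹ := by
  rw [ind, ind, List.tail_cons, disc_cons a hl]
  push_cast
  field_simp

theorem ind_cons_add_one {a : ℤ} {t : List ℤ} (hd : disc (a :: t) ≠ 0) {x : ℚ} (hx : x ≠ 2)
    (h : ind (a :: t) = 1 - x) : ind ((a + 1) :: t) = 1 - (2 - x)⁻¹ := by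
  have hT : (disc t : ℚ) = (1 - x) * disc (a :: t) := by
    rw [ind, List.tail_cons, div_eq_iff (by exact_mod_cast hd)] at h
    exact h
  rw [ind, List.tail_cons, disc_cons_add]
  push_cast
  rw [hT, show (disc (a :: t) : ℚ) + 1 * ((1 - x) * disc (a :: t)) = (2 - x) * disc (a :: t) by
    ring, mul_div_mul_right _ _ (by exact_mod_cast hd)]
  have : 2 - x ≠ 0 := sub_ne_zero.2 hx.symm
  field_simp
  ring

theorem ind_replicate_two_append {C : List ℤ} (hC : Admissible C) {u : ℚ} (hu : 0 < u)
    (h : ind C = 1 - u⁻¹) (k : ℕ) : ind (List.replicate k 2 ++ C) = 1 - (u + k)⁻¹ := by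
  induction k with
  | zero => simpa using h
  | succ k ih =>
    have hk := hC.replicate_two_append k
    rw [List.replicate_succ, List.cons_append, ind_cons 2 hk.1 hk.disc_pos.ne', ih]
    have : (0 : ℚ) < u + k := by positivity
    push_cast
    rw [show (2 : ℚ) - (1 - (u + k)⁻¹) = (u + (k + 1)) / (u + k) by field_simp; ring, inv_div]
    field_simp
    ring

theorem join_replicate_two (m : ℕ) (b : ℤ) (t : List ℤ) :
    join (List.replicate (m + 1) 2) (b :: t) = List.replicate m 2 ++ (b + 1) :: t := by
  rw [join, List.replicate_succ', List.dropLast_concat, List.getLast!_eq_getLast?_getD]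
  simp only [List.getLast?_append, List.getLast?_singleton, Option.some_or, Option.getD_some,
    List.head!_cons, List.tail_cons, List.append_assoc, List.cons_append, List.nil_append]
  rw [show (2 + b - 1 : ℤ) = b + 1 by ring]

theorem adjoint_append (as : List ℤ) (has : as ≠ []) (hpos : ∀ a ∈ as, 0 < a)
    (n : ℕ) (hn : 0 < n) (B : List ℤ)
    (hB : IsAdjoint (as.map (· + 1)) B) :
    IsAdjoint (as.map (· + 1) ++ [(n : ℤ) + 1]) (join (List.replicate n 2) B) := by
  set A := as.map (· + 1)
  obtain ⟨hB, hBind⟩ := hB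
  obtain ⟨m, rfl⟩ : ∃ m, n = m + 1 := ⟨n - 1, by omega⟩
  obtain ⟨b, t, rfl⟩ := List.exists_cons_of_ne_nil hB.1
  have hA : Admissible A.reverse := by
    refine ⟨by simpa [A] using has, ?_⟩
    simp only [A, List.mem_reverse, List.mem_map]
    rintro _ ⟨a, ha, rfl⟩
    linarith [hpos a ha]
  have hx : ind A.reverse < 1 := hA.ind_lt_one
  have hC := hB.cons_add zero_le_one
  have hCind := ind_cons_add_one hB.disc_pos.ne' (hx.trans one_lt_two).ne hBind
  rw [join_replicate_two]
  refine ⟨hC.replicate_two_append m, ?_⟩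
  rw [ind_replicate_two_append hC (by linarith) hCind, List.reverse_append,
    List.reverse_singleton, List.singleton_append, ind_cons _ hA.1 hA.disc_pos.ne']
  push_cast
  ring
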